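/- arXiv:math/0508074 — 2 statements merged into one kernel-verified Lean document; each statement's English description precedes it below -/
import Mathlib

section
/- Let C be a model category and let Ho C denote its localization at the class of weak equivalences, with localization functor L : C → Ho C. Let t : Y → Y' be a weak equivalence with Y fibrant, and let g : X → Y' be any morphism in C. Then there exist a weak equivalence s : X̃ → X and a morphism f : X̃ → Y in C such that (L t)⁻¹ ∘ L g = L f ∘ (L s)⁻¹ in Ho C. -/
open CategoryTheory CategoryTheory.Limits CategoryTheory.MorphismProperty

universe v u

/-- A morphism `f` is a retract of a morphism `g` if there is a commutative diagram
exhibiting `f` as a retract of `g` (horizontal composites are identities). -/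
def IsRetractOfMap {C : Type u} [Category.{v} C] {A B X Y : C}
    (f : A ⟶ B) (g : X ⟶ Y) : Prop :=
  ∃ (i : A ⟶ X) (r : X ⟶ A) (j : B ⟶ Y) (s : Y ⟶ B),
    i ≫ r = 𝟙 A ∧ j ≫ s = 𝟙 B ∧ i ≫ g = f ≫ j ∧ g ≫ s = r ≫ f

/-- A model structure on a category `C`: three distinguished classes of morphisms
(weak equivalences, cofibrations, fibrations), each closed under composition,
containing identities and closed under retracts, such that the weak equivalences
satisfy the two-out-of-three axiom, trivial cofibrations have the left lifting
property with respect to fibrations, trivial fibrations have the right lifting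
property with respect to cofibrations, and every morphism admits two functorial
factorisations: (trivial cofibration, fibration) and (cofibration, trivial
fibration). Together with bicompleteness of `C`, this is a model category. -/
structure ModelStructure (C : Type u) [Category.{v} C] where
  W : MorphismProperty C
  Cof : MorphismProperty C
  Fib : MorphismProperty C
  W_mult : W.IsMultiplicative
  Cof_mult : Cof.IsMultiplicative
  Fib_mult : Fib.IsMultiplicative
  two_out_of_three : W.HasTwoOutOfThreeProperty
  W_retract : ∀ {A B X Y : C} (f : A ⟶ B) (g : X ⟶ Y), IsRetractOfMap f g → W g → W f
  Cof_retract : ∀ {A B X Y : C} (f : A ⟶ B) (g : X ⟶ Y), IsRetractOfMap f g → Cof g → Cof f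
  Fib_retract : ∀ {A B X Y : C} (f : A ⟶ B) (g : X ⟶ Y), IsRetractOfMap f g → Fib g → Fib f
  lift_trivCof_fib : ∀ {A B X Y : C} (i : A ⟶ B) (p : X ⟶ Y),
    Cof i → W i → Fib p → HasLiftingProperty i p
  lift_cof_trivFib : ∀ {A B X Y : C} (i : A ⟶ B) (p : X ⟶ Y),
    Cof i → Fib p → W p → HasLiftingProperty i p
  fact₁ : HasFunctorialFactorization (W ⊓ Cof) Fib
  fact₂ : HasFunctorialFactorization Cof (W ⊓ Fib)

/-- Let `C` be a model category with homotopy category `Ho C := W.Localization`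
(the localization of `C` at the weak equivalences, with localization functor
`L = W.Q`). Let `t : Y ⟶ Y'` be a weak equivalence with `Y` fibrant and let
`g : X ⟶ Y'` be any morphism in `C`. Then there exist a weak equivalence
`s : X̃ ⟶ X` and a morphism `f : X̃ ⟶ Y` in `C` such that
`(L t)⁻¹ ∘ (L g) = (L f) ∘ (L s)⁻¹` in `Ho C`. -/
theorem exists_roof_of_fibrant_target
    {C : Type u} [Category.{v} C] [HasLimits C] [HasColimits C]
    (M : ModelStructure C) {X Y Y' : C}
    (t : Y ⟶ Y') (ht : M.W t) (hYfib : M.Fib (terminal.from Y)) (g : X ⟶ Y') :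
    ∃ (X' : C) (s : X' ⟶ X) (f : X' ⟶ Y) (hs : M.W s),
      M.W.Q.map g ≫ @inv _ _ _ _ (M.W.Q.map t) (Localization.inverts M.W.Q M.W t ht) =
        @inv _ _ _ _ (M.W.Q.map s) (Localization.inverts M.W.Q M.W s hs) ≫
          M.W.Q.map f := by
  have h23 := M.two_out_of_three
  have hfact₁ := M.fact₁
  have hfact₂ := M.fact₂
  -- factor t as trivial cofibration j followed by fibration q
  obtain ⟨Z, j, q, fac, hj, hq⟩ := factorizationData (M.W ⊓ M.Cof) M.Fib t
  -- q is a weak equivalence by 2-out-of-3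
  have hqW : M.W q := M.W.of_precomp j q hj.1 (by rw [fac]; exact ht)
  -- retraction r : Z ⟶ Y of j, using fibrancy of Y
  have hlp := M.lift_trivCof_fib j (terminal.from Y) hj.2 hj.1 hYfib
  have sq : CommSq (𝟙 Y) j (terminal.from Y) (terminal.from Z) :=
    ⟨Subsingleton.elim _ _⟩
  obtain ⟨⟨⟨r, hr, -⟩⟩⟩ := hlp.sq_hasLift sq
  -- pullback of q along g
  let P := pullback g q
  let s : P ⟶ X := pullback.fst g q
  let p : P ⟶ Z := pullback.snd g q
  have hsg : s ≫ g = p ≫ q := pullback.condition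
  -- s has the RLP against cofibrations
  have hrlp : ∀ {A B : C} (i : A ⟶ B), M.Cof i → HasLiftingProperty i s := by
    intro A B i hi
    have hq' := M.lift_cof_trivFib i q hi hq hqW
    constructor
    intro u v sq'
    have sq'' : CommSq (u ≫ p) i q (v ≫ g) := by
      constructor
      rw [← Category.assoc, ← sq'.w, Category.assoc, Category.assoc, hsg]
    obtain ⟨⟨⟨l, hl1, hl2⟩⟩⟩ := hq'.sq_hasLift sq''
    exact ⟨⟨⟨pullback.lift v l hl2.symm, by
      apply pullback.hom_ext
      · rw [Category.assoc]; erw [pullback.lift_fst]; exact sq'.w.symm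
      · rw [Category.assoc]; erw [pullback.lift_snd]; exact hl1, by erw [pullback.lift_fst]⟩⟩⟩
  -- retract argument: s is a weak equivalence
  obtain ⟨Z', i', p', fac', hi', hp'⟩ := factorizationData M.Cof (M.W ⊓ M.Fib) s
  have hlp' := hrlp i' hi'
  have sq2 : CommSq (𝟙 P) i' s p' := ⟨by simpa using fac'.symm⟩
  obtain ⟨⟨⟨h, hh1, hh2⟩⟩⟩ := hlp'.sq_hasLift sq2
  have hsW : M.W s := M.W_retract s p'
    ⟨i', h, 𝟙 X, 𝟙 X, hh1, Category.id_comp _, by simpa using fac', by simpa using hh2.symm⟩ hp'.1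
  refine ⟨P, s, p ≫ r, hsW, ?_⟩
  -- the equation in the homotopy category
  haveI hQt : IsIso (M.W.Q.map t) := Localization.inverts M.W.Q M.W t ht
  haveI hQs : IsIso (M.W.Q.map s) := Localization.inverts M.W.Q M.W s hsW
  haveI hQj : IsIso (M.W.Q.map j) := Localization.inverts M.W.Q M.W j hj.1
  have hrj : M.W.Q.map j ≫ M.W.Q.map r = 𝟙 _ := by
    rw [← M.W.Q.map_comp, hr, M.W.Q.map_id]
  have hrj' : M.W.Q.map r ≫ M.W.Q.map j = 𝟙 _ := by
    rw [← IsIso.inv_eq_of_hom_inv_id hrj, IsIso.inv_hom_id]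
  have key : M.W.Q.map (p ≫ r) ≫ M.W.Q.map t = M.W.Q.map s ≫ M.W.Q.map g := by
    calc M.W.Q.map (p ≫ r) ≫ M.W.Q.map t
        = M.W.Q.map p ≫ (M.W.Q.map r ≫ M.W.Q.map j) ≫ M.W.Q.map q := by
          rw [← fac]; simp
      _ = M.W.Q.map p ≫ M.W.Q.map q := by rw [hrj']; simp
      _ = M.W.Q.map s ≫ M.W.Q.map g := by
          rw [← M.W.Q.map_comp, ← M.W.Q.map_comp, hsg]
  rw [← cancel_epi (M.W.Q.map s), ← cancel_mono (M.W.Q.map t)]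
  simp [← key]
end

section
/- Let C be a model category with localization functor L : C → Ho C at the weak equivalences. Let X and Y be objects of C, let p : QX → X be a cofibrant replacement (QX cofibrant and p an acyclic fibration), and let i : Y → RY be a fibrant replacement (RY fibrant and i an acyclic cofibration). Then every morphism φ : X → Y in Ho C can be written as φ = (L i)⁻¹ ∘ (L f) ∘ (L p)⁻¹ for some morphism f : QX → RY in C. -/
open CategoryTheory CategoryTheory.Limits CategoryTheory.MorphismProperty

universe v u

section Aux

variable {C : Type u} [Category.{v} C] [HasLimits C] [HasColimits C] (M : ModelStructure C)

/-- Existence of cofibrant replacements. -/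
lemma exists_cofibrant_replacement (B : C) :
    ∃ (QB : C) (q : QB ⟶ B), M.Cof (initial.to QB) ∧ M.Fib q ∧ M.W q := by
  haveI := M.fact₂
  let d := factorizationData M.Cof (M.W ⊓ M.Fib) (initial.to B)
  refine ⟨d.Z, d.p, ?_, d.hp.2, d.hp.1⟩
  have : initial.to d.Z = d.i := initial.hom_ext _ _
  rw [this]
  exact d.hi

/-- Existence of fibrant replacements. -/
lemma exists_fibrant_replacement (B : C) :
    ∃ (RB : C) (j : B ⟶ RB), M.Fib (terminal.from RB) ∧ M.Cof j ∧ M.W j := by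
  haveI := M.fact₁
  let d := factorizationData (M.W ⊓ M.Cof) M.Fib (terminal.from B)
  refine ⟨d.Z, d.i, ?_, d.hi.2, d.hi.1⟩
  have : terminal.from d.Z = d.p := terminal.hom_ext _ _
  rw [this]
  exact d.hp

/-- The auxiliary morphism property on the localization: a morphism `φ` satisfies it
if for every cofibrant replacement of its source representative and fibrant replacement
of its target representative, `φ` conjugated appropriately is in the image of `W.Q`. -/
def ReprProp : MorphismProperty M.W.Localization := fun A' B' φ =>
  ∀ ⦃A B : C⦄ (hA : M.W.Q.obj A = A') (hB : M.W.Q.obj B = B')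
    ⦃QA RB : C⦄ (p : QA ⟶ A) (_ : M.Cof (initial.to QA)) (_ : M.Fib p) (_ : M.W p)
    (i : B ⟶ RB) (_ : M.Fib (terminal.from RB)) (_ : M.Cof i) (_ : M.W i),
    ∃ f : QA ⟶ RB,
      M.W.Q.map f = M.W.Q.map p ≫ eqToHom hA ≫ φ ≫ eqToHom hB.symm ≫ M.W.Q.map i

lemma Q_obj_injective {A B : C} (h : M.W.Q.obj A = M.W.Q.obj B) : A = B :=
  (Localization.Construction.objEquiv M.W).injective h

instance : (ReprProp M).IsStableUnderComposition where
  comp_mem := by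
    intro A' B' C' φ ψ hφ hψ
    intro A Cc hA hC QA RC p hQA hpF hpW i hRC hiC hiW
    haveI := M.two_out_of_three
    -- a representative for the middle object
    obtain ⟨B, hB⟩ : ∃ B : C, M.W.Q.obj B = B' :=
      ⟨(Localization.Construction.objEquiv M.W).symm B',
        (Localization.Construction.objEquiv M.W).apply_symm_apply B'⟩
    obtain ⟨QB, q, hQB, hqF, hqW⟩ := exists_cofibrant_replacement M B
    obtain ⟨RB, j, hRB, hjC, hjW⟩ := exists_fibrant_replacement M B
    obtain ⟨f, hf⟩ := hφ hA hB p hQA hpF hpW j hRB hjC hjW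
    obtain ⟨g, hg⟩ := hψ hB hC q hQB hqF hqW i hRC hiC hiW
    -- factor `q ≫ j` as a cofibration `k` followed by a trivial fibration `π`
    haveI := M.fact₂
    let d := factorizationData M.Cof (M.W ⊓ M.Fib) (q ≫ j)
    have hkW : M.W d.i :=
      M.W.of_postcomp d.i d.p d.hp.1 (by rw [d.fac]; exact M.W_mult.comp_mem q j hqW hjW)
    -- lift `g` along the trivial cofibration `k`
    haveI : HasLiftingProperty d.i (terminal.from RC) :=
      M.lift_trivCof_fib d.i (terminal.from RC) d.hi hkW hRC
    have sq₁ : CommSq g d.i (terminal.from RC) (terminal.from d.Z) :=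
      ⟨terminal.hom_ext _ _⟩
    let G := sq₁.lift
    have hG : d.i ≫ G = g := sq₁.fac_left
    -- lift `f` along the trivial fibration `π`
    haveI : HasLiftingProperty (initial.to QA) d.p :=
      M.lift_cof_trivFib (initial.to QA) d.p hQA d.hp.2 d.hp.1
    have sq₂ : CommSq (initial.to d.Z) (initial.to QA) d.p f :=
      ⟨initial.hom_ext _ _⟩
    let F := sq₂.lift
    have hF : F ≫ d.p = f := sq₂.fac_right
    refine ⟨F ≫ G, ?_⟩
    -- invertibility of the relevant images
    haveI : IsIso (M.W.Q.map d.i) := M.W.Q_inverts _ hkW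
    haveI : IsIso (M.W.Q.map d.p) := M.W.Q_inverts _ d.hp.1
    haveI : IsIso (M.W.Q.map q) := M.W.Q_inverts _ hqW
    haveI : IsIso (M.W.Q.map j) := M.W.Q_inverts _ hjW
    have hF' : M.W.Q.map F = M.W.Q.map f ≫ inv (M.W.Q.map d.p) := by
      rw [IsIso.eq_comp_inv, ← M.W.Q.map_comp, hF]
    have hG' : M.W.Q.map G = inv (M.W.Q.map d.i) ≫ M.W.Q.map g := by
      rw [IsIso.eq_inv_comp, ← M.W.Q.map_comp, hG]
    have hq' : M.W.Q.map q = (M.W.Q.map d.i ≫ M.W.Q.map d.p) ≫ inv (M.W.Q.map j) := by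
      rw [IsIso.eq_comp_inv, ← M.W.Q.map_comp, ← M.W.Q.map_comp, d.fac]
    rw [M.W.Q.map_comp, hF', hG', hf, hg, hq']
    simp

lemma reprProp_top : ReprProp M = ⊤ := by
  haveI := M.two_out_of_three
  apply Localization.Construction.morphismProperty_eq_top
  · intro A₀ B₀ g A B hA hB QA RB p hQA hpF hpW i hRB hiC hiW
    obtain rfl : A = A₀ := Q_obj_injective M hA
    obtain rfl : B = B₀ := Q_obj_injective M hB
    refine ⟨p ≫ g ≫ i, ?_⟩
    simp
  · intro A₀ B₀ w hw A B hA hB QA RB p hQA hpF hpW i hRB hiC hiW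
    obtain rfl : A = B₀ := Q_obj_injective M hA
    obtain rfl : B = A₀ := Q_obj_injective M hB
    -- factor `w` as a (trivial) cofibration followed by a trivial fibration
    haveI := M.fact₂
    let d := factorizationData M.Cof (M.W ⊓ M.Fib) w
    have hw₁ : M.W d.i :=
      M.W.of_postcomp d.i d.p d.hp.1 (by rw [d.fac]; exact hw)
    -- lift `p` along the trivial fibration `d.p`
    haveI : HasLiftingProperty (initial.to QA) d.p :=
      M.lift_cof_trivFib (initial.to QA) d.p hQA d.hp.2 d.hp.1
    have sq₁ : CommSq (initial.to d.Z) (initial.to QA) d.p p :=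
      ⟨initial.hom_ext _ _⟩
    let u := sq₁.lift
    have hu : u ≫ d.p = p := sq₁.fac_right
    -- lift `i` along the trivial cofibration `d.i`
    haveI : HasLiftingProperty d.i (terminal.from RB) :=
      M.lift_trivCof_fib d.i (terminal.from RB) d.hi hw₁ hRB
    have sq₂ : CommSq i d.i (terminal.from RB) (terminal.from d.Z) :=
      ⟨terminal.hom_ext _ _⟩
    let v := sq₂.lift
    have hv : d.i ≫ v = i := sq₂.fac_left
    refine ⟨u ≫ v, ?_⟩
    haveI : IsIso (M.W.Q.map d.i) := M.W.Q_inverts _ hw₁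
    haveI : IsIso (M.W.Q.map d.p) := M.W.Q_inverts _ d.hp.1
    haveI : IsIso (M.W.Q.map w) := M.W.Q_inverts _ hw
    have hu' : M.W.Q.map u = M.W.Q.map p ≫ inv (M.W.Q.map d.p) := by
      rw [IsIso.eq_comp_inv, ← M.W.Q.map_comp, hu]
    have hv' : M.W.Q.map v = inv (M.W.Q.map d.i) ≫ M.W.Q.map i := by
      rw [IsIso.eq_inv_comp, ← M.W.Q.map_comp, hv]
    have e0 : M.W.Q.map w = M.W.Q.map d.i ≫ M.W.Q.map d.p := by
      rw [← M.W.Q.map_comp, d.fac]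
    have h2 : M.W.Q.map w ≫ inv (M.W.Q.map d.p) ≫ inv (M.W.Q.map d.i) = 𝟙 _ := by
      rw [e0]; simp
    have h3 : inv (M.W.Q.map w) = inv (M.W.Q.map d.p) ≫ inv (M.W.Q.map d.i) :=
      IsIso.inv_eq_of_hom_inv_id h2
    have h4 : inv (M.W.Q.map w) = Localization.Construction.wInv w hw :=
      IsIso.inv_eq_of_hom_inv_id (Localization.Construction.wIso w hw).hom_inv_id
    rw [M.W.Q.map_comp, hu', hv', ← h4, h3]
    simp

end Aux

/-- Let `C` be a model category with localization functor `L = W.Q : C ⥤ Ho C` at the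
weak equivalences. Let `p : QX ⟶ X` be a cofibrant replacement (`QX` cofibrant,
`p` an acyclic fibration) and `i : Y ⟶ RY` a fibrant replacement (`RY` fibrant,
`i` an acyclic cofibration). Then every morphism `φ : X ⟶ Y` in `Ho C` can be
written as `φ = (L i)⁻¹ ∘ (L f) ∘ (L p)⁻¹` for some morphism `f : QX ⟶ RY` in `C`. -/
theorem homotopy_hom_eq_standard_representation
    {C : Type u} [Category.{v} C] [HasLimits C] [HasColimits C]
    (M : ModelStructure C) {X Y QX RY : C}
    (p : QX ⟶ X) (hQX : M.Cof (initial.to QX)) (hpFib : M.Fib p) (hpW : M.W p)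
    (i : Y ⟶ RY) (hRY : M.Fib (terminal.from RY)) (hiCof : M.Cof i) (hiW : M.W i)
    (φ : M.W.Q.obj X ⟶ M.W.Q.obj Y) :
    ∃ f : QX ⟶ RY,
      φ = @inv _ _ _ _ (M.W.Q.map p) (Localization.inverts M.W.Q M.W p hpW) ≫
            M.W.Q.map f ≫
              @inv _ _ _ _ (M.W.Q.map i) (Localization.inverts M.W.Q M.W i hiW) := by
  haveI : IsIso (M.W.Q.map p) := Localization.inverts M.W.Q M.W p hpW
  haveI : IsIso (M.W.Q.map i) := Localization.inverts M.W.Q M.W i hiW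
  have h := reprProp_top M
  have hφ : ReprProp M φ := by rw [h]; trivial
  obtain ⟨f, hf⟩ := hφ rfl rfl p hQX hpFib hpW i hRY hiCof hiW
  refine ⟨f, ?_⟩
  simp only [eqToHom_refl, Category.comp_id, Category.id_comp] at hf
  rw [hf]
  simp
end
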